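/- arXiv:2208.09726 — 2 statements merged into one kernel-verified Lean document; each statement's English description precedes it below -/
import Mathlib

section
/- Let ν be a probability measure on a measurable space Ω, let M > 0, let (f_n)_{n≥1} be a sequence of measurable functions on Ω with values in [0, M], and let f ∈ L¹(ν). Assume that for every strictly increasing map ψ : ℕ → ℕ the Cesàro means (1/n) ∑_{k=1}^n f_{ψ(k)}(ω) converge to f(ω) for ν-almost every ω. Then (f_n) converges to f weakly in L¹(ν); in particular, for every bounded measurable function φ on Ω, ∫ f_n φ dν → ∫ f φ dν. -/
open MeasureTheory Filter Topology

/-- A bounded real sequence all of whose subsequences have Cesàro means tending to `L`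
converges to `L`. -/
lemma tendsto_of_cesaro_subseq (a : ℕ → ℝ) (C : ℝ) (hC : ∀ n, |a n| ≤ C) (L : ℝ)
    (h : ∀ ψ : ℕ → ℕ, StrictMono ψ →
      Tendsto (fun n : ℕ => (∑ k ∈ Finset.range n, a (ψ k)) / n) atTop (𝓝 L)) :
    Tendsto a atTop (𝓝 L) := by
  by_contra hcon
  rw [Metric.tendsto_atTop] at hcon
  push_neg at hcon
  obtain ⟨ε, hε, hfreq⟩ := hcon
  have hfreq' : ∃ᶠ n in atTop, (L + ε ≤ a n) ∨ (a n ≤ L - ε) := by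
    rw [frequently_atTop]
    intro N
    obtain ⟨n, hn, h2⟩ := hfreq N
    rw [Real.dist_eq] at h2
    refine ⟨n, hn, ?_⟩
    rcases le_abs.mp h2 with h3 | h3
    · left; linarith
    · right; linarith
  rcases frequently_or_distrib.mp hfreq' with hf | hf
  · obtain ⟨ψ, hψ, hψa⟩ := extraction_of_frequently_atTop hf
    have hle : L + ε ≤ L := by
      refine ge_of_tendsto (h ψ hψ) (eventually_atTop.2 ⟨1, fun n hn => ?_⟩)
      have hsum := Finset.card_nsmul_le_sum (Finset.range n) (fun k => a (ψ k)) (L + ε)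
        (fun k _ => hψa k)
      rw [Finset.card_range, nsmul_eq_mul] at hsum
      have hn0 : (0 : ℝ) < n := by exact_mod_cast hn
      rw [le_div_iff₀ hn0, mul_comm]
      exact hsum
    linarith
  · obtain ⟨ψ, hψ, hψa⟩ := extraction_of_frequently_atTop hf
    have hle : L ≤ L - ε := by
      refine le_of_tendsto (h ψ hψ) (eventually_atTop.2 ⟨1, fun n hn => ?_⟩)
      have hsum := Finset.sum_le_card_nsmul (Finset.range n) (fun k => a (ψ k)) (L - ε)
        (fun k _ => hψa k)
      rw [Finset.card_range, nsmul_eq_mul] at hsum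
      have hn0 : (0 : ℝ) < n := by exact_mod_cast hn
      rw [div_le_iff₀ hn0, mul_comm]
      exact hsum
    linarith

/-- Lemma 4: if `(f_n)` is uniformly bounded in `[0, M]`, `f ∈ L¹(ν)`, and the Cesàro
means of every subsequence of `(f_n)` converge a.e. to `f`, then `(f_n)` converges
weakly to `f` in `L¹(ν)`: for every bounded measurable `φ`,
`∫ f_n φ dν → ∫ f φ dν`. -/
theorem weak_convergence_of_cesaro_subsequences
    {Ω : Type*} [MeasurableSpace Ω] (ν : Measure Ω) [IsProbabilityMeasure ν]
    (M : ℝ) (hM : 0 < M)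
    (f : ℕ → Ω → ℝ) (hmeas : ∀ n, Measurable (f n))
    (hbd : ∀ n ω, f n ω ∈ Set.Icc (0 : ℝ) M)
    (F : Ω → ℝ) (hF : Integrable F ν)
    (hces : ∀ ψ : ℕ → ℕ, StrictMono ψ →
      ∀ᵐ ω ∂ν, Tendsto (fun n : ℕ => (∑ k ∈ Finset.range n, f (ψ k) ω) / n)
        atTop (𝓝 (F ω))) :
    ∀ φ : Ω → ℝ, Measurable φ → (∃ C : ℝ, ∀ ω, |φ ω| ≤ C) →
      Tendsto (fun n : ℕ => ∫ ω, f n ω * φ ω ∂ν) atTop (𝓝 (∫ ω, F ω * φ ω ∂ν)) := by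
  rintro φ hφm ⟨C, hC⟩
  -- pointwise bound on products
  have hbnd : ∀ m ω, ‖f m ω * φ ω‖ ≤ M * C := by
    intro m ω
    rw [norm_mul]
    refine mul_le_mul ?_ (hC ω) (abs_nonneg _) hM.le
    rw [Real.norm_eq_abs, abs_of_nonneg (hbd m ω).1]
    exact (hbd m ω).2
  -- integrability of the products
  have hint : ∀ m, Integrable (fun ω => f m ω * φ ω) ν := by
    intro m
    refine ⟨((hmeas m).mul hφm).aestronglyMeasurable, ?_⟩
    exact HasFiniteIntegral.of_bounded (C := M * C) (Eventually.of_forall (hbnd m))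
  set a : ℕ → ℝ := fun n => ∫ ω, f n ω * φ ω ∂ν with ha
  refine tendsto_of_cesaro_subseq a (M * C) (fun n => ?_) _ (fun ψ hψ => ?_)
  · -- boundedness of the integrals
    have := norm_integral_le_of_norm_le_const (μ := ν)
      (f := fun ω => f n ω * φ ω) (C := M * C) (Eventually.of_forall (hbnd n))
    simpa [ha] using this
  -- Cesàro means of the integrals tend to the limit, by dominated convergence
  have hDCT : Tendsto
      (fun n : ℕ => ∫ ω, (∑ k ∈ Finset.range n, f (ψ k) ω) / n * φ ω ∂ν)
      atTop (𝓝 (∫ ω, F ω * φ ω ∂ν)) := by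
    refine tendsto_integral_of_dominated_convergence (fun _ => M * C)
      (fun n => ?_) (integrable_const _) (fun n => Eventually.of_forall fun ω => ?_)
      ((hces ψ hψ).mono fun ω hω => hω.mul_const (φ ω))
    · exact (((Finset.measurable_sum _ (fun k _ => hmeas (ψ k))).div_const
        (n : ℝ)).mul hφm).aestronglyMeasurable
    · -- the bound
      set s := ∑ k ∈ Finset.range n, f (ψ k) ω with hs
      have hs0 : 0 ≤ s := Finset.sum_nonneg fun k _ => (hbd (ψ k) ω).1
      have hsM : s / (n : ℝ) ≤ M := by
        rcases Nat.eq_zero_or_pos n with h0 | h0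
        · simp [hs, h0, hM.le]
        · rw [div_le_iff₀ (by exact_mod_cast h0)]
          have := Finset.sum_le_card_nsmul (Finset.range n) (fun k => f (ψ k) ω) M
            (fun k _ => (hbd (ψ k) ω).2)
          simpa [hs, mul_comm] using this
      rw [norm_mul]
      refine mul_le_mul ?_ (hC ω) (abs_nonneg _) hM.le
      rw [Real.norm_eq_abs, abs_of_nonneg (div_nonneg hs0 (Nat.cast_nonneg n))]
      exact hsM
  have key : ∀ n : ℕ, ∫ ω, (∑ k ∈ Finset.range n, f (ψ k) ω) / n * φ ω ∂ν
      = (∑ k ∈ Finset.range n, a (ψ k)) / n := by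
    intro n
    have h1 : (fun ω => (∑ k ∈ Finset.range n, f (ψ k) ω) / n * φ ω)
        = fun ω => (∑ k ∈ Finset.range n, f (ψ k) ω * φ ω) / n := by
      funext ω
      rw [div_mul_eq_mul_div, Finset.sum_mul]
    rw [h1, integral_div, integral_finset_sum _ fun k _ => hint (ψ k)]
  simpa only [key] using hDCT
end

section
/- Let (a_n)_{n≥1} be a sequence of real numbers and l ∈ ℝ. If for every strictly increasing map ψ : ℕ → ℕ the Cesàro means (1/n) ∑_{k=1}^n a_{ψ(k)} converge to l, then a_n → l. -/
open Filter Topology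

lemma cesaro_aux (a : ℕ → ℝ) (l ε : ℝ) (hε : 0 < ε) (ψ : ℕ → ℕ)
    (hb : ∀ k, l + ε ≤ a (ψ k))
    (ht : Tendsto (fun n : ℕ => (∑ k ∈ Finset.range n, a (ψ k)) / n) atTop (𝓝 l)) :
    False := by
  obtain ⟨N, hN⟩ := Metric.tendsto_atTop.mp ht ε hε
  have hN1 := hN (max N 1) (le_max_left _ _)
  set n := max N 1 with hn
  have hnpos : (0:ℝ) < n := by
    have : 1 ≤ n := le_max_right _ _
    exact_mod_cast Nat.lt_of_lt_of_le Nat.zero_lt_one this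
  have hsum : (n : ℝ) * (l + ε) ≤ ∑ k ∈ Finset.range n, a (ψ k) := by
    calc (n:ℝ) * (l+ε) = ∑ _k ∈ Finset.range n, (l+ε) := by
            simp [Finset.sum_const]; ring
      _ ≤ _ := Finset.sum_le_sum fun k _ => hb k
  have hmean : l + ε ≤ (∑ k ∈ Finset.range n, a (ψ k)) / n := by
    rw [le_div_iff₀ hnpos]
    nlinarith
  rw [Real.dist_eq] at hN1
  have := abs_lt.mp hN1
  linarith [this.1, this.2]

/-- If the Cesàro means of every subsequence of a real sequence `a` converge to `l`,
then `a` itself converges to `l`. -/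
theorem tendsto_of_cesaro_subsequences
    (a : ℕ → ℝ) (l : ℝ)
    (h : ∀ ψ : ℕ → ℕ, StrictMono ψ →
      Tendsto (fun n : ℕ => (∑ k ∈ Finset.range n, a (ψ k)) / n) atTop (𝓝 l)) :
    Tendsto a atTop (𝓝 l) := by
  by_contra hna
  rw [Metric.tendsto_atTop] at hna
  push_neg at hna
  obtain ⟨ε, hε, hfreq⟩ := hna
  have hS : {n | ε ≤ dist (a n) l}.Infinite := by
    rw [← Nat.frequently_atTop_iff_infinite]
    rw [frequently_atTop]
    intro N
    obtain ⟨n, hn, hd⟩ := hfreq N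
    exact ⟨n, hn, hd⟩
  have hsub : {n | ε ≤ dist (a n) l} ⊆
      {n | l + ε ≤ a n} ∪ {n | a n ≤ l - ε} := by
    intro n hn
    simp only [Set.mem_setOf_eq, Real.dist_eq] at hn
    rcases le_abs.mp hn with h1 | h2
    · left; simp only [Set.mem_setOf_eq]; linarith
    · right; simp only [Set.mem_setOf_eq]; linarith
  rcases Set.infinite_union.mp (hS.mono hsub) with hT | hT
  · set ψ := Nat.nth (fun n => l + ε ≤ a n) with hψdef
    have hmono : StrictMono ψ := Nat.nth_strictMono hT
    have hmem : ∀ k, l + ε ≤ a (ψ k) := fun k => Nat.nth_mem_of_infinite hT k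
    exact cesaro_aux a l ε hε ψ hmem (h ψ hmono)
  · set ψ := Nat.nth (fun n => a n ≤ l - ε) with hψdef
    have hmono : StrictMono ψ := Nat.nth_strictMono hT
    have hmem : ∀ k, a (ψ k) ≤ l - ε := fun k => Nat.nth_mem_of_infinite hT k
    refine cesaro_aux (fun n => -a n) (-l) ε hε ψ (fun k => by have := hmem k; simp; linarith) ?_
    have := (h ψ hmono).neg
    convert this using 2 with n
    simp [neg_div, Finset.sum_neg_distrib]
end
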